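/- arXiv:1901.01299 — 3 statements merged into one kernel-verified Lean document; each statement's English description precedes it below -/
import Mathlib

section
/- For all real r, t ≥ 0, the ratio (cosh(r) - 1)/(cosh(r+t) - 1) is at least e^{-t}(1 - 2e^{-r}). -/
open Real

/-
Drop the small exponential in each `cosh`: `cosh (r + t) - 1 ≤ e^{r+t}/2`, while
`cosh r - 1 ≥ e^r/2 - 1 = (e^r/2)(1 - 2e^{-r})`; multiplying the first bound by `e^{-t}` the
factors `e^{±t}` cancel. When `1 - 2e^{-r} ≤ 0` the right-hand side is nonpositive.
-/

namespace Real

theorem cosh_sub_one_le_exp_div_two {x : ℝ} (hx : 0 ≤ x) : cosh x - 1 ≤ exp x / 2 := by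
  have : exp (-x) ≤ 1 := exp_le_one_iff.2 (neg_nonpos.2 hx)
  rw [cosh_eq]
  linarith

theorem exp_div_two_sub_one_le_cosh_sub_one (x : ℝ) : exp x / 2 - 1 ≤ cosh x - 1 := by
  rw [cosh_eq]
  linarith [exp_pos (-x)]

theorem exp_neg_mul_one_sub_mul_exp_add (r t : ℝ) :
    exp (-t) * (1 - 2 * exp (-r)) * (exp (r + t) / 2) = exp r / 2 - 1 := by
  rw [exp_neg, exp_neg, exp_add]
  field_simp

end Real

theorem cosh_ratio_ge_general (r t : ℝ) (ht : 0 ≤ t) :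
    (Real.cosh r - 1) / (Real.cosh (r + t) - 1) ≥ Real.exp (-t) * (1 - 2 * Real.exp (-r)) := by
  rcases le_or_gt (1 - 2 * exp (-r)) 0 with hc | hc
  · exact (mul_nonpos_of_nonneg_of_nonpos (exp_pos _).le hc).trans
      (div_nonneg (sub_nonneg.2 (one_le_cosh r)) (sub_nonneg.2 (one_le_cosh _)))
  have hr : 0 < r := neg_lt_zero.1 (exp_lt_one_iff.1 (by linarith))
  have hd : 0 < cosh (r + t) - 1 := sub_pos.2 (one_lt_cosh.2 (by positivity))
  rw [ge_iff_le, le_div_iff₀ hd]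
  calc exp (-t) * (1 - 2 * exp (-r)) * (cosh (r + t) - 1)
      ≤ exp (-t) * (1 - 2 * exp (-r)) * (exp (r + t) / 2) := by
        gcongr
        exact cosh_sub_one_le_exp_div_two (by positivity)
    _ = exp r / 2 - 1 := exp_neg_mul_one_sub_mul_exp_add r t
    _ ≤ cosh r - 1 := exp_div_two_sub_one_le_cosh_sub_one r

/-- For all reals `r, t ≥ 0`, `(cosh r - 1)/(cosh (r+t) - 1) ≥ e^{-t} (1 - 2 e^{-r})`. -/
theorem cosh_ratio_ge (r t : ℝ) (hr : 0 ≤ r) (ht : 0 ≤ t) :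
    (Real.cosh r - 1) / (Real.cosh (r + t) - 1) ≥ Real.exp (-t) * (1 - 2 * Real.exp (-r)) :=
  cosh_ratio_ge_general r t ht
end

section
/- Let (X, μ) be a measure space, and suppose for each k ≥ 1 we have a nonnegative function f̂_k ∈ L^∞(X,μ) with ‖f̂_k‖_1 ≤ 2^{-k}, and a measurable set Ê_k ⊆ X on which a maximal operator satisfies M(f̂_k)(x) ≥ 2^k. Assume the Ê_k are independent events and ∑_k μ(Ê_k) = ∞. If M is monotone in the sense that M(g)(x) ≥ M(h)(x) whenever g ≥ h ≥ 0 pointwise, then f̂ := ∑_k f̂_k satisfies ‖f̂‖_1 ≤ 1 and M(f̂)(x) = ∞ for almost every x ∈ X. -/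
/-! By the second Borel–Cantelli lemma almost every `x` lies in `E k` for infinitely many `k`,
and for each such `k` monotonicity gives `M (∑ f) x ≥ M (f k) x ≥ 2 ^ (k + 1)`. -/

open MeasureTheory ENNReal Filter ProbabilityTheory Topology

lemma ENNReal.tsum_one_div_two_pow_succ : ∑' k : ℕ, (1 / 2 : ℝ≥0∞) ^ (k + 1) = 1 := by
  rw [ENNReal.tsum_geometric_add_one, one_div, one_sub_inv_two, inv_inv,
    ENNReal.inv_mul_cancel two_ne_zero ofNat_ne_top]

lemma lintegral_tsum_le_one_of_le_one_div_two_pow_succ {X : Type*} [MeasurableSpace X]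
    {μ : Measure X} {f : ℕ → X → ℝ≥0∞} (hf : ∀ k, AEMeasurable (f k) μ)
    (hf1 : ∀ k, ∫⁻ x, f k x ∂μ ≤ (1 / 2) ^ (k + 1)) :
    ∫⁻ x, ∑' k, f k x ∂μ ≤ 1 :=
  calc ∫⁻ x, ∑' k, f k x ∂μ = ∑' k, ∫⁻ x, f k x ∂μ := lintegral_tsum hf
    _ ≤ ∑' k : ℕ, (1 / 2 : ℝ≥0∞) ^ (k + 1) := ENNReal.tsum_le_tsum hf1
    _ = 1 := ENNReal.tsum_one_div_two_pow_succ

lemma ae_frequently_mem_of_iIndepSet {Ω : Type*} [MeasurableSpace Ω] {μ : Measure Ω}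
    {E : ℕ → Set Ω} (hE : ∀ k, MeasurableSet (E k)) (hind : iIndepSet E μ)
    (hsum : ∑' k, μ (E k) = ∞) :
    ∀ᵐ x ∂μ, ∃ᶠ k in atTop, x ∈ E k := by
  have := hind.isProbabilityMeasure
  have hlimsup : ∀ᵐ x ∂μ, x ∈ limsup E atTop := by
    rw [ae_mem_iff_measure_eq (MeasurableSet.measurableSet_limsup hE).nullMeasurableSet,
      measure_limsup_eq_one hE hind hsum, measure_univ]
  simpa only [mem_limsup_iff_frequently_mem] using hlimsup

lemma ENNReal.eq_top_of_frequently_le {u : ℕ → ℝ≥0∞} (hu : Tendsto u atTop (𝓝 ∞))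
    {a : ℝ≥0∞} (h : ∃ᶠ k in atTop, u k ≤ a) : a = ∞ := by
  by_contra ha
  obtain ⟨k, hka, hak⟩ :=
    (h.and_eventually (hu.eventually_const_lt (lt_top_iff_ne_top.2 ha))).exists
  exact hka.not_gt hak

lemma apply_tsum_eq_top_of_frequently_mem {X : Type*} {M : (X → ℝ≥0∞) → X → ℝ≥0∞}
    (hM : Monotone M) {f : ℕ → X → ℝ≥0∞} {E : ℕ → Set X}
    (hME : ∀ k, ∀ x ∈ E k, (2 : ℝ≥0∞) ^ (k + 1) ≤ M (f k) x) {x : X}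
    (hx : ∃ᶠ k in atTop, x ∈ E k) :
    M (fun y => ∑' k, f k y) x = ∞ := by
  have htwo : Tendsto (fun k : ℕ => (2 : ℝ≥0∞) ^ (k + 1)) atTop (𝓝 ∞) :=
    (ENNReal.tendsto_pow_atTop_nhds_top_iff.2 one_lt_two).comp (tendsto_add_atTop_nat 1)
  refine ENNReal.eq_top_of_frequently_le htwo (hx.mono fun k hk => ?_)
  exact (hME k x hk).trans (hM (fun y => ENNReal.le_tsum k) x)

theorem maximal_blowup_general {X : Type*} [MeasurableSpace X] (μ : Measure X)
    (M : (X → ℝ≥0∞) → X → ℝ≥0∞)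
    (hM : ∀ g h : X → ℝ≥0∞, (∀ x, g x ≤ h x) → ∀ x, M g x ≤ M h x)
    (f : ℕ → X → ℝ≥0∞) (hfmeas : ∀ k, Measurable (f k))
    (hf1 : ∀ k, ∫⁻ x, f k x ∂μ ≤ (1 / 2) ^ (k + 1))
    (E : ℕ → Set X) (hE : ∀ k, MeasurableSet (E k))
    (hME : ∀ k, ∀ x ∈ E k, (2 : ℝ≥0∞) ^ (k + 1) ≤ M (f k) x)
    (hind : ∀ F : Finset ℕ, μ (⋂ k ∈ F, E k) = ∏ k ∈ F, μ (E k))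
    (hsum : ∑' k, μ (E k) = ⊤) :
    (∫⁻ x, (∑' k, f k x) ∂μ ≤ 1) ∧ ∀ᵐ x ∂μ, M (fun y => ∑' k, f k y) x = ⊤ := by
  have hindep : iIndepSet E μ := (iIndepSet_iff_meas_biInter hE).2 hind
  refine ⟨lintegral_tsum_le_one_of_le_one_div_two_pow_succ (fun k => (hfmeas k).aemeasurable) hf1,
    ?_⟩
  filter_upwards [ae_frequently_mem_of_iIndepSet hE hindep hsum] with x hx
  exact apply_tsum_eq_top_of_frequently_mem (fun g h hgh => hM g h hgh) hME hx

/-- Given nonnegative functions `f k` (indexed so that the `k`-th one corresponds to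
`f̂_{k+1}`) on a probability space with `‖f k‖₁ ≤ 2^{-(k+1)}`, each essentially bounded,
measurable sets `Ê k` on which a monotone maximal operator `M` satisfies
`M (f k) x ≥ 2^{k+1}`, with the `Ê k` independent and `∑ μ (Ê k) = ∞`, the sum
`f̂ = ∑ₖ f k` satisfies `‖f̂‖₁ ≤ 1` and `M f̂ = ∞` almost everywhere. -/
theorem maximal_blowup {X : Type*} [MeasurableSpace X] (μ : Measure X)
    [IsProbabilityMeasure μ]
    (M : (X → ℝ≥0∞) → X → ℝ≥0∞)
    (hM : ∀ g h : X → ℝ≥0∞, (∀ x, g x ≤ h x) → ∀ x, M g x ≤ M h x)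
    (f : ℕ → X → ℝ≥0∞) (hfmeas : ∀ k, Measurable (f k))
    (hfbdd : ∀ k, ∃ C : ℝ≥0∞, C < ⊤ ∧ ∀ᵐ x ∂μ, f k x ≤ C)
    (hf1 : ∀ k, ∫⁻ x, f k x ∂μ ≤ (1 / 2) ^ (k + 1))
    (E : ℕ → Set X) (hE : ∀ k, MeasurableSet (E k))
    (hME : ∀ k, ∀ x ∈ E k, (2 : ℝ≥0∞) ^ (k + 1) ≤ M (f k) x)
    (hind : ∀ F : Finset ℕ, μ (⋂ k ∈ F, E k) = ∏ k ∈ F, μ (E k))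
    (hsum : ∑' k, μ (E k) = ⊤) :
    (∫⁻ x, (∑' k, f k x) ∂μ ≤ 1) ∧ ∀ᵐ x ∂μ, M (fun y => ∑' k, f k y) x = ⊤ :=
  maximal_blowup_general μ M hM f hfmeas hf1 E hE hME hind hsum
end

section
/- For all real numbers r ≥ 0 and t ≥ 0: (e^r - 2 + e^{-r}) / (e^{r+t} - 2 + e^{-r-t}) ≥ e^{-t}(1 - 2e^{-r}), where the denominator is positive for r + t > 0. -/
/-!
Writing `e^s - 2 + e^{-s} = e^s (1 - e^{-s})²`, the ratio equals
`e^{-t} (1 - e^{-r})² / (1 - e^{-(r+t)})²`. For `r + t > 0` the denominator lies in `(0, 1]`,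
so the ratio is at least `e^{-t} (1 - e^{-r})² ≥ e^{-t} (1 - 2 e^{-r})`.
-/

namespace Real

theorem exp_sub_two_add_exp_neg (s : ℝ) :
    exp s - 2 + exp (-s) = exp s * (1 - exp (-s)) ^ 2 := by
  have h : exp s * exp (-s) = 1 := by rw [← exp_add, add_neg_cancel, exp_zero]
  linear_combination (2 - exp (-s)) * h

theorem exp_sub_two_add_exp_neg_pos {s : ℝ} (hs : s ≠ 0) : 0 < exp s - 2 + exp (-s) := by
  have h : 1 - exp (-s) ≠ 0 := sub_ne_zero.2 fun h => hs (by simpa using h.symm)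
  rw [exp_sub_two_add_exp_neg]
  positivity

theorem exp_neg_mul_sq_le_exp_sub_two_add_exp_neg_div {r t : ℝ} (hrt : 0 < r + t) :
    exp (-t) * (1 - exp (-r)) ^ 2 ≤
      (exp r - 2 + exp (-r)) / (exp (r + t) - 2 + exp (-(r + t))) := by
  have hD := exp_sub_two_add_exp_neg_pos hrt.ne'
  have hq_pos : 0 ≤ 1 - exp (-(r + t)) := by
    rw [sub_nonneg, exp_le_one_iff]; linarith
  have hq_le : 1 - exp (-(r + t)) ≤ 1 := by linarith [exp_pos (-(r + t))]
  have hq_sq : (1 - exp (-(r + t))) ^ 2 ≤ 1 := pow_le_one₀ hq_pos hq_le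
  have hexp : exp (-t) * exp (r + t) = exp r := by rw [← exp_add]; ring_nf
  rw [le_div_iff₀ hD, exp_sub_two_add_exp_neg (r + t), exp_sub_two_add_exp_neg r]
  calc exp (-t) * (1 - exp (-r)) ^ 2 * (exp (r + t) * (1 - exp (-(r + t))) ^ 2)
      = exp r * (1 - exp (-r)) ^ 2 * (1 - exp (-(r + t))) ^ 2 := by rw [← hexp]; ring
    _ ≤ exp r * (1 - exp (-r)) ^ 2 := by
      exact mul_le_of_le_one_right (by positivity) hq_sq

end Real

theorem exp_ratio_ge_general (r t : ℝ) (hrt : 0 < r + t) :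
    0 < Real.exp (r + t) - 2 + Real.exp (-r - t) ∧
    (Real.exp r - 2 + Real.exp (-r)) / (Real.exp (r + t) - 2 + Real.exp (-r - t))
      ≥ Real.exp (-t) * (1 - 2 * Real.exp (-r)) := by
  rw [← neg_add']
  refine ⟨Real.exp_sub_two_add_exp_neg_pos hrt.ne', ?_⟩
  calc Real.exp (-t) * (1 - 2 * Real.exp (-r))
      ≤ Real.exp (-t) * (1 - Real.exp (-r)) ^ 2 := by
        gcongr; nlinarith [sq_nonneg (Real.exp (-r))]
    _ ≤ _ := Real.exp_neg_mul_sq_le_exp_sub_two_add_exp_neg_div hrt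

/-- For `r, t ≥ 0` with `r + t > 0`:
`(e^r - 2 + e^{-r})/(e^{r+t} - 2 + e^{-r-t}) ≥ e^{-t}(1 - 2e^{-r})`,
and the denominator is positive. -/
theorem exp_ratio_ge (r t : ℝ) (hr : 0 ≤ r) (ht : 0 ≤ t) (hrt : 0 < r + t) :
    0 < Real.exp (r + t) - 2 + Real.exp (-r - t) ∧
    (Real.exp r - 2 + Real.exp (-r)) / (Real.exp (r + t) - 2 + Real.exp (-r - t))
      ≥ Real.exp (-t) * (1 - 2 * Real.exp (-r)) :=
  exp_ratio_ge_general r t hrt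
end
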